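/- Consider the single-support V-SLIP model with stance contact point c1 ∈ ℝ and Hamiltonian H(q,p) = (p1² + p2²)/(2 m_h) + m_h g0 q2 + (k0/2)(L0 − L1(q))², where L1(q) = sqrt((q1 − c1)² + q2²), and control potential φ_1(q) = −(1/2)(L0 − L1(q))². Let u1 : [t0, t1] → ℝ be continuous with |u1(t)| ≤ ū for all t, and let (q(t), p(t)) be a C¹ solution of q̇ = ∂H/∂p, ṗ = −∂H/∂q + u1(t) ∇φ_1(q) such that 0 ≤ L1(q(t)) ≤ L0 for all t, and such that there exists t_m ∈ [t0, t1] with t ↦ φ_1(q(t)) monotone on [t0, t_m] and monotone on [t_m, t1]. Then the total change of energy during the single support phase is bounded: |H(q(t1), p(t1)) − H(q(t0), p(t0))| ≤ ū · L0². -/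

import Mathlib

/-!
Along a solution the nominal spring is conservative, so the energy changes at the rate
`u₁ · d/dt φ₁(q(t))`. On an interval where `φ₁ ∘ q` is monotone this rate is `u₁` times a
derivative of constant sign, hence `|ΔH| ≤ ū |Δφ₁|`, and `0 ≤ L₁ ≤ L₀` gives `|Δφ₁| ≤ L₀² / 2`;
the two monotone pieces add up to `ū L₀²`.

The delicate point is that `φ₁` is not differentiable where the leg length vanishes. There `φ₁`
attains its minimum, so monotonicity pins the hip to the contact point on a one-sided
neighbourhood of such an instant; the velocity then vanishes and `φ₁ ∘ q` is still differentiable,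
with derivative `0`.
-/

/-- Stance leg length `L1(q) = sqrt((q1 - c1)^2 + q2^2)`. -/
noncomputable def legLen (c q1 q2 : ℝ) : ℝ := Real.sqrt ((q1 - c) ^ 2 + q2 ^ 2)

/-- Hamiltonian of the single-support V-SLIP model. -/
noncomputable def Hss (mh g0 k0 L0 c1 q1 q2 p1 p2 : ℝ) : ℝ :=
  (p1 ^ 2 + p2 ^ 2) / (2 * mh) + mh * g0 * q2 + k0 / 2 * (L0 - legLen c1 q1 q2) ^ 2

/-- Control potential `φ_1(q) = -(1/2)(L0 - L1(q))^2`. -/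
noncomputable def phiPot (c L0 q1 q2 : ℝ) : ℝ := -(1 / 2) * (L0 - legLen c q1 q2) ^ 2

/-- `∂φ_1/∂q1` (valid for `L1 > 0`). -/
noncomputable def dphi1 (c L0 q1 q2 : ℝ) : ℝ :=
  (L0 - legLen c q1 q2) * (q1 - c) / legLen c q1 q2

/-- `∂φ_1/∂q2` (valid for `L1 > 0`). -/
noncomputable def dphi2 (c L0 q1 q2 : ℝ) : ℝ :=
  (L0 - legLen c q1 q2) * q2 / legLen c q1 q2

open Set Asymptotics intervalIntegral

theorem HasDerivAt.eq_zero_of_eqOn {f : ℝ → ℝ} {f' t : ℝ} {s : Set ℝ} (hf : HasDerivAt f f' t)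
    (hs : UniqueDiffWithinAt ℝ s t) (hfs : EqOn f (fun _ => f t) s) : f' = 0 :=
  hs.eq_deriv s hf.hasDerivWithinAt ((hasDerivWithinAt_const t s (f t)).congr hfs rfl)

theorem abs_sub_le_mul_sub_of_hasDerivAt_mul {F ψ u g : ℝ → ℝ} {a b C : ℝ} (hab : a ≤ b)
    (hF : ContinuousOn F (Icc a b)) (hψ : ContinuousOn ψ (Icc a b))
    (hu : ContinuousOn u (Icc a b)) (huC : ∀ t ∈ Icc a b, |u t| ≤ C)
    (hψm : MonotoneOn ψ (Icc a b)) (hψ' : ∀ t ∈ Ioo a b, HasDerivAt ψ (g t) t)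
    (hF' : ∀ t ∈ Ioo a b, HasDerivAt F (u t * g t) t) :
    |F b - F a| ≤ C * (ψ b - ψ a) := by
  have hg : ∀ t ∈ Ioo a b, 0 ≤ g t := fun t ht =>
    (hψ' t ht).hasDerivWithinAt.nonneg_of_monotoneOn (isOpen_Ioo.preperfect t ht)
      (hψm.mono Ioo_subset_Icc_self)
  have hgi : IntervalIntegrable g MeasureTheory.volume a b :=
    intervalIntegrable_deriv_of_nonneg (g := ψ) (by rwa [uIcc_of_le hab])
      (by simpa [hab] using hψ') (by simpa [hab] using hg)
  have hugi : IntervalIntegrable (fun t => u t * g t) MeasureTheory.volume a b :=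
    hgi.continuousOn_mul (by rwa [uIcc_of_le hab])
  rw [← integral_eq_sub_of_hasDerivAt_of_le hab hF hF' hugi,
    ← integral_eq_sub_of_hasDerivAt_of_le hab hψ hψ' hgi, ← integral_const_mul]
  calc |∫ t in a..b, u t * g t| ≤ ∫ t in a..b, |u t * g t| := abs_integral_le_integral_abs hab
    _ ≤ ∫ t in a..b, C * g t := by
      refine integral_mono_on_of_le_Ioo hab hugi.abs (hgi.const_mul C) fun t ht => ?_
      rw [abs_mul, abs_of_nonneg (hg t ht)]
      exact mul_le_mul_of_nonneg_right (huC t (Ioo_subset_Icc_self ht)) (hg t ht)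

theorem abs_sub_le_mul_abs_sub_of_hasDerivAt_mul {F ψ u g : ℝ → ℝ} {a b C : ℝ} (hab : a ≤ b)
    (hF : ContinuousOn F (Icc a b)) (hψ : ContinuousOn ψ (Icc a b))
    (hu : ContinuousOn u (Icc a b)) (huC : ∀ t ∈ Icc a b, |u t| ≤ C)
    (hψm : MonotoneOn ψ (Icc a b) ∨ AntitoneOn ψ (Icc a b))
    (hψ' : ∀ t ∈ Ioo a b, HasDerivAt ψ (g t) t)
    (hF' : ∀ t ∈ Ioo a b, HasDerivAt F (u t * g t) t) :
    |F b - F a| ≤ C * |ψ b - ψ a| := by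
  rcases hψm with hm | ha
  · rw [abs_of_nonneg (sub_nonneg.2 (hm (left_mem_Icc.2 hab) (right_mem_Icc.2 hab) hab))]
    exact abs_sub_le_mul_sub_of_hasDerivAt_mul hab hF hψ hu huC hm hψ' hF'
  · rw [abs_sub_comm (ψ b),
      abs_of_nonneg (sub_nonneg.2 (ha (left_mem_Icc.2 hab) (right_mem_Icc.2 hab) hab))]
    have := abs_sub_le_mul_sub_of_hasDerivAt_mul (ψ := -ψ) (u := -u) (g := -g) hab hF hψ.neg
      hu.neg (by simpa using huC) ha.neg (fun t ht => (hψ' t ht).neg)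
      (fun t ht => (hF' t ht).congr_deriv (neg_mul_neg _ _).symm)
    simpa [sub_eq_add_neg, add_comm] using this

lemma legLen_nonneg (c x y : ℝ) : 0 ≤ legLen c x y := Real.sqrt_nonneg _

lemma legLen_eq_zero_iff {c x y : ℝ} : legLen c x y = 0 ↔ x = c ∧ y = 0 := by
  rw [legLen, Real.sqrt_eq_zero (by positivity)]
  constructor
  · intro h
    exact ⟨by nlinarith [sq_nonneg (x - c), sq_nonneg y], by nlinarith [sq_nonneg (x - c)]⟩
  · rintro ⟨rfl, rfl⟩
    ring

lemma legLen_le_abs_add_abs (c x y : ℝ) : legLen c x y ≤ |x - c| + |y| := by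
  refine Real.sqrt_le_iff.2 ⟨by positivity, ?_⟩
  nlinarith [sq_abs (x - c), sq_abs y, mul_nonneg (abs_nonneg (x - c)) (abs_nonneg y)]

lemma abs_phiPot_sub_phiPot_le {c L0 x y x' y' : ℝ} (h : legLen c x y ≤ L0)
    (h' : legLen c x' y' ≤ L0) : |phiPot c L0 x y - phiPot c L0 x' y'| ≤ L0 ^ 2 / 2 := by
  have := legLen_nonneg c x y
  have := legLen_nonneg c x' y'
  rw [phiPot, phiPot, abs_le]
  constructor <;> nlinarith

lemma legLen_eq_zero_of_phiPot_le {c L0 x y x' y' : ℝ} (hL : legLen c x y ≤ L0)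
    (h0 : legLen c x' y' = 0) (h : phiPot c L0 x y ≤ phiPot c L0 x' y') : legLen c x y = 0 := by
  have := legLen_nonneg c x y
  rw [phiPot, phiPot, h0] at h
  nlinarith

lemma hasDerivAt_phiPot_comp {c L0 v1 v2 t : ℝ} {q1 q2 : ℝ → ℝ} (hq1 : HasDerivAt q1 v1 t)
    (hq2 : HasDerivAt q2 v2 t) (hL : legLen c (q1 t) (q2 t) ≠ 0) :
    HasDerivAt (fun s => phiPot c L0 (q1 s) (q2 s))
      (dphi1 c L0 (q1 t) (q2 t) * v1 + dphi2 c L0 (q1 t) (q2 t) * v2) t := by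
  have hσ : (q1 t - c) ^ 2 + q2 t ^ 2 ≠ 0 := by
    intro h; apply hL; rw [legLen, h, Real.sqrt_zero]
  have hL' := ((hq1.sub_const c).fun_pow 2).fun_add (hq2.fun_pow 2) |>.sqrt hσ
  refine ((hL'.const_sub L0).fun_pow 2).const_mul (-(1 / 2)) |>.congr_deriv ?_
  rw [legLen] at hL
  simp only [dphi1, dphi2, legLen]
  field_simp
  ring

lemma hasDerivAt_legLen_comp_of_eq_zero {c t : ℝ} {q1 q2 : ℝ → ℝ} (hq1 : HasDerivAt q1 0 t)
    (hq2 : HasDerivAt q2 0 t) (hL : legLen c (q1 t) (q2 t) = 0) :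
    HasDerivAt (fun s => legLen c (q1 s) (q2 s)) 0 t := by
  obtain ⟨hc, h0⟩ := legLen_eq_zero_iff.1 hL
  rw [hasDerivAt_iff_isLittleO] at hq1 hq2 ⊢
  simp only [smul_zero, sub_zero] at hq1 hq2 ⊢
  refine IsBigO.trans_isLittleO (isBigO_of_le _ fun s => ?_) (hq1.norm_left.add hq2.norm_left)
  rw [hL, sub_zero, Real.norm_of_nonneg (legLen_nonneg _ _ _),
    Real.norm_of_nonneg (by positivity), hc, h0, sub_zero]
  exact legLen_le_abs_add_abs c (q1 s) (q2 s)

lemma hasDerivAt_phiPot_comp_of_monotoneOn {c L0 a b t v1 v2 : ℝ} {q1 q2 : ℝ → ℝ}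
    (hL : ∀ s ∈ Icc a b, legLen c (q1 s) (q2 s) ≤ L0)
    (hmono : MonotoneOn (fun s => phiPot c L0 (q1 s) (q2 s)) (Icc a b) ∨
      AntitoneOn (fun s => phiPot c L0 (q1 s) (q2 s)) (Icc a b))
    (ht : t ∈ Ioo a b) (hq1 : HasDerivAt q1 v1 t) (hq2 : HasDerivAt q2 v2 t) :
    HasDerivAt (fun s => phiPot c L0 (q1 s) (q2 s))
      (dphi1 c L0 (q1 t) (q2 t) * v1 + dphi2 c L0 (q1 t) (q2 t) * v2) t := by
  by_cases hLt : legLen c (q1 t) (q2 t) = 0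
  swap
  · exact hasDerivAt_phiPot_comp hq1 hq2 hLt
  -- `φ` is minimal where the leg is collapsed, so on one side of `t` the hip rests at the contact
  -- point; the velocity vanishes, and the junk values `dphi1 = dphi2 = 0` at `t` do no harm.
  obtain ⟨s, hs, hst, hmin⟩ : ∃ s ⊆ Icc a b, UniqueDiffWithinAt ℝ s t ∧
      ∀ τ ∈ s, phiPot c L0 (q1 τ) (q2 τ) ≤ phiPot c L0 (q1 t) (q2 t) := by
    rcases hmono with hm | hm
    · exact ⟨Icc a t, Icc_subset_Icc_right ht.2.le,
        uniqueDiffOn_Icc ht.1 t (right_mem_Icc.2 ht.1.le),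
        fun τ hτ => hm (Icc_subset_Icc_right ht.2.le hτ) (Ioo_subset_Icc_self ht) hτ.2⟩
    · exact ⟨Icc t b, Icc_subset_Icc_left ht.1.le,
        uniqueDiffOn_Icc ht.2 t (left_mem_Icc.2 ht.2.le),
        fun τ hτ => hm (Ioo_subset_Icc_self ht) (Icc_subset_Icc_left ht.1.le hτ) hτ.1⟩
  have hrest : ∀ τ ∈ s, q1 τ = q1 t ∧ q2 τ = q2 t := fun τ hτ => by
    obtain ⟨h1, h2⟩ :=
      legLen_eq_zero_iff.1 (legLen_eq_zero_of_phiPot_le (hL τ (hs hτ)) hLt (hmin τ hτ))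
    obtain ⟨h1', h2'⟩ := legLen_eq_zero_iff.1 hLt
    exact ⟨h1.trans h1'.symm, h2.trans h2'.symm⟩
  obtain rfl : v1 = 0 := hq1.eq_zero_of_eqOn hst fun τ hτ => (hrest τ hτ).1
  obtain rfl : v2 = 0 := hq2.eq_zero_of_eqOn hst fun τ hτ => (hrest τ hτ).2
  have hL' := hasDerivAt_legLen_comp_of_eq_zero hq1 hq2 hLt
  exact (((hL'.const_sub L0).fun_pow 2).const_mul (-(1 / 2))).congr_deriv (by simp)

lemma hasDerivAt_Hss_comp {mh g0 k0 L0 c1 t u : ℝ} {q1 q2 p1 p2 : ℝ → ℝ} (hmh : mh ≠ 0)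
    (hq2 : HasDerivAt q2 (p2 t / mh) t)
    (hp1 : HasDerivAt p1
      (k0 * (L0 - legLen c1 (q1 t) (q2 t)) * (q1 t - c1) / legLen c1 (q1 t) (q2 t)
        + u * dphi1 c1 L0 (q1 t) (q2 t)) t)
    (hp2 : HasDerivAt p2
      (-(mh * g0) + k0 * (L0 - legLen c1 (q1 t) (q2 t)) * q2 t / legLen c1 (q1 t) (q2 t)
        + u * dphi2 c1 L0 (q1 t) (q2 t)) t)
    (hφ : HasDerivAt (fun s => phiPot c1 L0 (q1 s) (q2 s))
      (dphi1 c1 L0 (q1 t) (q2 t) * (p1 t / mh) + dphi2 c1 L0 (q1 t) (q2 t) * (p2 t / mh)) t) :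
    HasDerivAt (fun s => Hss mh g0 k0 L0 c1 (q1 s) (q2 s) (p1 s) (p2 s))
      (u * (dphi1 c1 L0 (q1 t) (q2 t) * (p1 t / mh) + dphi2 c1 L0 (q1 t) (q2 t) * (p2 t / mh)))
      t := by
  have e1 : k0 * (L0 - legLen c1 (q1 t) (q2 t)) * (q1 t - c1) / legLen c1 (q1 t) (q2 t)
      = k0 * dphi1 c1 L0 (q1 t) (q2 t) := by rw [dphi1]; ring
  have e2 : k0 * (L0 - legLen c1 (q1 t) (q2 t)) * q2 t / legLen c1 (q1 t) (q2 t)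
      = k0 * dphi2 c1 L0 (q1 t) (q2 t) := by rw [dphi2]; ring
  rw [e1, ← add_mul] at hp1
  rw [e2, add_assoc, ← add_mul] at hp2
  have hH : (fun s => Hss mh g0 k0 L0 c1 (q1 s) (q2 s) (p1 s) (p2 s)) = fun s =>
      (p1 s ^ 2 + p2 s ^ 2) / (2 * mh) + mh * g0 * q2 s - k0 * phiPot c1 L0 (q1 s) (q2 s) := by
    funext s
    simp only [Hss, phiPot]
    ring
  rw [hH]
  refine (((hp1.fun_pow 2).fun_add (hp2.fun_pow 2)).div_const (2 * mh)).fun_add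
    (hq2.const_mul (mh * g0)) |>.fun_sub (hφ.const_mul k0) |>.congr_deriv ?_
  field_simp
  ring

lemma abs_Hss_sub_le_of_monotoneOn {mh g0 k0 L0 c1 ubar a b : ℝ} {q1 q2 p1 p2 u1 : ℝ → ℝ}
    (hmh : mh ≠ 0) (hab : a ≤ b)
    (hu1c : ContinuousOn u1 (Icc a b)) (hu1b : ∀ t ∈ Icc a b, |u1 t| ≤ ubar)
    (hLle : ∀ t ∈ Icc a b, legLen c1 (q1 t) (q2 t) ≤ L0)
    (hq1 : ∀ t ∈ Icc a b, HasDerivAt q1 (p1 t / mh) t)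
    (hq2 : ∀ t ∈ Icc a b, HasDerivAt q2 (p2 t / mh) t)
    (hp1 : ∀ t ∈ Icc a b, HasDerivAt p1
      (k0 * (L0 - legLen c1 (q1 t) (q2 t)) * (q1 t - c1) / legLen c1 (q1 t) (q2 t)
        + u1 t * dphi1 c1 L0 (q1 t) (q2 t)) t)
    (hp2 : ∀ t ∈ Icc a b, HasDerivAt p2
      (-(mh * g0) + k0 * (L0 - legLen c1 (q1 t) (q2 t)) * q2 t / legLen c1 (q1 t) (q2 t)
        + u1 t * dphi2 c1 L0 (q1 t) (q2 t)) t)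
    (hmono : MonotoneOn (fun t => phiPot c1 L0 (q1 t) (q2 t)) (Icc a b) ∨
      AntitoneOn (fun t => phiPot c1 L0 (q1 t) (q2 t)) (Icc a b)) :
    |Hss mh g0 k0 L0 c1 (q1 b) (q2 b) (p1 b) (p2 b)
      - Hss mh g0 k0 L0 c1 (q1 a) (q2 a) (p1 a) (p2 a)| ≤ ubar * (L0 ^ 2 / 2) := by
  have hq1c : ContinuousOn q1 (Icc a b) := fun t ht => (hq1 t ht).continuousAt.continuousWithinAt
  have hq2c : ContinuousOn q2 (Icc a b) := fun t ht => (hq2 t ht).continuousAt.continuousWithinAt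
  have hp1c : ContinuousOn p1 (Icc a b) := fun t ht => (hp1 t ht).continuousAt.continuousWithinAt
  have hp2c : ContinuousOn p2 (Icc a b) := fun t ht => (hp2 t ht).continuousAt.continuousWithinAt
  have hφc : ContinuousOn (fun t => phiPot c1 L0 (q1 t) (q2 t)) (Icc a b) := by
    simp only [phiPot, legLen]
    fun_prop
  have hHc : ContinuousOn (fun t => Hss mh g0 k0 L0 c1 (q1 t) (q2 t) (p1 t) (p2 t)) (Icc a b) := by
    simp only [Hss, legLen]
    fun_prop
  have hφ' (t : ℝ) (ht : t ∈ Ioo a b) := hasDerivAt_phiPot_comp_of_monotoneOn hLle hmono ht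
    (hq1 t (Ioo_subset_Icc_self ht)) (hq2 t (Ioo_subset_Icc_self ht))
  have hH' (t : ℝ) (ht : t ∈ Ioo a b) := hasDerivAt_Hss_comp hmh (hq2 t (Ioo_subset_Icc_self ht))
    (hp1 t (Ioo_subset_Icc_self ht)) (hp2 t (Ioo_subset_Icc_self ht)) (hφ' t ht)
  have hΔH := abs_sub_le_mul_abs_sub_of_hasDerivAt_mul hab hHc hφc hu1c hu1b hmono hφ' hH'
  have hΔφ :=
    abs_phiPot_sub_phiPot_le (hLle b (right_mem_Icc.2 hab)) (hLle a (left_mem_Icc.2 hab))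
  have hubar : 0 ≤ ubar := (abs_nonneg _).trans (hu1b a (left_mem_Icc.2 hab))
  exact hΔH.trans (mul_le_mul_of_nonneg_left hΔφ hubar)

theorem stmt10_general (mh g0 k0 L0 c1 ubar : ℝ) (hmh : 0 < mh)
    (t0 t1 tm : ℝ) (htm : tm ∈ Set.Icc t0 t1)
    (q1 q2 p1 p2 u1 : ℝ → ℝ)
    (hu1c : ContinuousOn u1 (Set.Icc t0 t1))
    (hu1b : ∀ t ∈ Set.Icc t0 t1, |u1 t| ≤ ubar)
    (hLle : ∀ t ∈ Set.Icc t0 t1, legLen c1 (q1 t) (q2 t) ≤ L0)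
    (hq1 : ∀ t ∈ Set.Icc t0 t1, HasDerivAt q1 (p1 t / mh) t)
    (hq2 : ∀ t ∈ Set.Icc t0 t1, HasDerivAt q2 (p2 t / mh) t)
    (hp1 : ∀ t ∈ Set.Icc t0 t1, HasDerivAt p1
      (k0 * (L0 - legLen c1 (q1 t) (q2 t)) * (q1 t - c1) / legLen c1 (q1 t) (q2 t)
        + u1 t * dphi1 c1 L0 (q1 t) (q2 t)) t)
    (hp2 : ∀ t ∈ Set.Icc t0 t1, HasDerivAt p2
      (-(mh * g0)
        + k0 * (L0 - legLen c1 (q1 t) (q2 t)) * q2 t / legLen c1 (q1 t) (q2 t)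
        + u1 t * dphi2 c1 L0 (q1 t) (q2 t)) t)
    (hmono1 : MonotoneOn (fun t => phiPot c1 L0 (q1 t) (q2 t)) (Set.Icc t0 tm) ∨
              AntitoneOn (fun t => phiPot c1 L0 (q1 t) (q2 t)) (Set.Icc t0 tm))
    (hmono2 : MonotoneOn (fun t => phiPot c1 L0 (q1 t) (q2 t)) (Set.Icc tm t1) ∨
              AntitoneOn (fun t => phiPot c1 L0 (q1 t) (q2 t)) (Set.Icc tm t1)) :
    |Hss mh g0 k0 L0 c1 (q1 t1) (q2 t1) (p1 t1) (p2 t1)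
      - Hss mh g0 k0 L0 c1 (q1 t0) (q2 t0) (p1 t0) (p2 t0)| ≤ ubar * L0 ^ 2 := by
  have hpiece {a b : ℝ} (hab : a ≤ b) (hsub : Icc a b ⊆ Icc t0 t1)
      (hmono : MonotoneOn (fun t => phiPot c1 L0 (q1 t) (q2 t)) (Icc a b) ∨
        AntitoneOn (fun t => phiPot c1 L0 (q1 t) (q2 t)) (Icc a b)) :=
    abs_Hss_sub_le_of_monotoneOn hmh.ne' hab (hu1c.mono hsub) (fun t ht => hu1b t (hsub ht))
      (fun t ht => hLle t (hsub ht)) (fun t ht => hq1 t (hsub ht)) (fun t ht => hq2 t (hsub ht))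
      (fun t ht => hp1 t (hsub ht)) (fun t ht => hp2 t (hsub ht)) hmono
  calc _ ≤ |Hss mh g0 k0 L0 c1 (q1 t1) (q2 t1) (p1 t1) (p2 t1)
          - Hss mh g0 k0 L0 c1 (q1 tm) (q2 tm) (p1 tm) (p2 tm)|
        + |Hss mh g0 k0 L0 c1 (q1 tm) (q2 tm) (p1 tm) (p2 tm)
          - Hss mh g0 k0 L0 c1 (q1 t0) (q2 t0) (p1 t0) (p2 t0)| := abs_sub_le _ _ _
    _ ≤ ubar * (L0 ^ 2 / 2) + ubar * (L0 ^ 2 / 2) :=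
        add_le_add (hpiece htm.2 (Icc_subset_Icc_left htm.1) hmono2)
          (hpiece htm.1 (Icc_subset_Icc_right htm.2) hmono1)
    _ = ubar * L0 ^ 2 := by ring

/-- Bounded energy change during the single support phase of the V-SLIP model:
if the stiffness variation satisfies `|u1| ≤ ū`, the leg length stays in `[0, L0]`, and the
spring potential `φ_1(q(t))` is monotone on `[t0, t_m]` and on `[t_m, t1]`, then
`|H(t1) - H(t0)| ≤ ū L0²`. -/
theorem stmt10 (mh g0 k0 L0 c1 ubar : ℝ) (hmh : 0 < mh) (hg : 0 < g0) (hk : 0 < k0)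
    (hL0 : 0 < L0) (hubar : 0 < ubar)
    (t0 t1 tm : ℝ) (ht01 : t0 ≤ t1) (htm : tm ∈ Set.Icc t0 t1)
    (q1 q2 p1 p2 u1 : ℝ → ℝ)
    (hu1c : ContinuousOn u1 (Set.Icc t0 t1))
    (hu1b : ∀ t ∈ Set.Icc t0 t1, |u1 t| ≤ ubar)
    (hLpos : ∀ t ∈ Set.Icc t0 t1, 0 ≤ legLen c1 (q1 t) (q2 t))
    (hLle : ∀ t ∈ Set.Icc t0 t1, legLen c1 (q1 t) (q2 t) ≤ L0)
    (hq1 : ∀ t ∈ Set.Icc t0 t1, HasDerivAt q1 (p1 t / mh) t)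
    (hq2 : ∀ t ∈ Set.Icc t0 t1, HasDerivAt q2 (p2 t / mh) t)
    (hp1 : ∀ t ∈ Set.Icc t0 t1, HasDerivAt p1
      (k0 * (L0 - legLen c1 (q1 t) (q2 t)) * (q1 t - c1) / legLen c1 (q1 t) (q2 t)
        + u1 t * dphi1 c1 L0 (q1 t) (q2 t)) t)
    (hp2 : ∀ t ∈ Set.Icc t0 t1, HasDerivAt p2
      (-(mh * g0)
        + k0 * (L0 - legLen c1 (q1 t) (q2 t)) * q2 t / legLen c1 (q1 t) (q2 t)
        + u1 t * dphi2 c1 L0 (q1 t) (q2 t)) t)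
    (hmono1 : MonotoneOn (fun t => phiPot c1 L0 (q1 t) (q2 t)) (Set.Icc t0 tm) ∨
              AntitoneOn (fun t => phiPot c1 L0 (q1 t) (q2 t)) (Set.Icc t0 tm))
    (hmono2 : MonotoneOn (fun t => phiPot c1 L0 (q1 t) (q2 t)) (Set.Icc tm t1) ∨
              AntitoneOn (fun t => phiPot c1 L0 (q1 t) (q2 t)) (Set.Icc tm t1)) :
    |Hss mh g0 k0 L0 c1 (q1 t1) (q2 t1) (p1 t1) (p2 t1)
      - Hss mh g0 k0 L0 c1 (q1 t0) (q2 t0) (p1 t0) (p2 t0)| ≤ ubar * L0 ^ 2 :=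
  stmt10_general mh g0 k0 L0 c1 ubar hmh t0 t1 tm htm q1 q2 p1 p2 u1 hu1c hu1b hLle hq1 hq2 hp1 hp2
    hmono1 hmono2
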